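/- For all α > 0 and β > 0, every eigenvalue λ ∈ ℂ of the iteration matrix Γ_{α,β} = M_{α,β}⁻¹ N_{α,β} (regarded as a complex matrix) satisfies |λ| < 1; equivalently, the spectral radius of Γ_{α,β} is strictly less than 1. -/

import Mathlib

/-!
Write `D = M + N = diag(αI, βI)` and `H = M - N`, which is the saddle point matrix `𝒜`. If
`Γu = λu` with `u ≠ 0`, then `(1 + λ) H u = (1 - λ) D u`, and `1 + λ ≠ 0` because `D` is
invertible; so `H u = μ D u` with `μ = (1 - λ) / (1 + λ)`, and `|λ| < 1` exactly when `Re μ > 0`.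
Pairing with `u` gives `Re (u* H u) = Re μ · u* D u`. The skew blocks `Bᵀ, -B` add nothing to
the real part of `u* H u`, so it is `Re (x* A x) + Re (y* C y) ≥ 0` for `u = (x, y)`, hence
`Re μ ≥ 0`. If `Re μ = 0`, then `x* A x = 0`, so `x = 0`; the first block row of `H u = μ D u`
then reads `Bᵀ y = 0`, and `y = 0` because `B` has full row rank.
-/

open Matrix
open scoped ComplexOrder

theorem Complex.norm_lt_one_of_re_one_sub_div_one_add_pos {z : ℂ}
    (hz : 0 < ((1 - z) / (1 + z)).re) : ‖z‖ < 1 := by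
  have hre : ((1 - z) / (1 + z)).re = (1 - ‖z‖ ^ 2) / normSq (1 + z) := by
    rw [div_re, ← add_div, Complex.sq_norm, normSq_apply z]
    congr 1
    simp only [sub_re, one_re, add_re, sub_im, one_im, add_im]
    ring
  rw [hre] at hz
  have hnum := ((div_pos_iff.mp hz).resolve_right fun h => (normSq_nonneg _).not_gt h.2).1
  nlinarith [norm_nonneg z]

namespace Matrix

variable {ι κ : Type*}

section OfReal

theorem map_ofReal_mul {l : Type*} [Fintype κ] (L : Matrix ι κ ℝ) (K : Matrix κ l ℝ) :
    (L * K).map Complex.ofReal = L.map Complex.ofReal * K.map Complex.ofReal :=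
  Matrix.map_mul (f := Complex.ofRealHom)

theorem map_ofReal_conjTranspose (K : Matrix ι κ ℝ) :
    Kᴴ.map Complex.ofReal = (K.map Complex.ofReal)ᴴ :=
  conjTranspose_map _ fun _ => (Complex.conj_ofReal _).symm

theorem det_map_ofReal [Fintype ι] [DecidableEq ι] (A : Matrix ι ι ℝ) :
    (A.map Complex.ofReal).det = A.det :=
  (RingHom.map_det Complex.ofRealHom A).symm

theorem map_ofReal_nonsing_inv [Fintype ι] [DecidableEq ι] (A : Matrix ι ι ℝ) :
    A⁻¹.map Complex.ofReal = (A.map Complex.ofReal)⁻¹ := by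
  by_cases hA : IsUnit A.det
  · refine (inv_eq_left_inv ?_).symm
    rw [← map_ofReal_mul, nonsing_inv_mul _ hA]
    exact Matrix.map_one _ rfl (by simp)
  · have hAc : ¬IsUnit (A.map Complex.ofReal).det := by
      simpa [det_map_ofReal, isUnit_iff_ne_zero] using hA
    rw [nonsing_inv_apply_not_isUnit _ hA, nonsing_inv_apply_not_isUnit _ hAc]
    exact Matrix.map_zero _ rfl

theorem PosSemidef.map_ofReal [Fintype ι] {A : Matrix ι ι ℝ} (hA : A.PosSemidef) :
    (A.map Complex.ofReal).PosSemidef := by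
  classical
  open scoped MatrixOrder in
  obtain ⟨X, rfl⟩ := CStarAlgebra.nonneg_iff_eq_star_mul_self.mp hA.nonneg
  rw [star_eq_conjTranspose, map_ofReal_mul, map_ofReal_conjTranspose]
  exact posSemidef_conjTranspose_mul_self _

theorem PosDef.map_ofReal [Fintype ι] {A : Matrix ι ι ℝ} (hA : A.PosDef) :
    (A.map Complex.ofReal).PosDef := by
  classical
  rw [hA.posSemidef.map_ofReal.posDef_iff_det_ne_zero, det_map_ofReal, Complex.ofReal_ne_zero]
  exact hA.det_pos.ne'

theorem injective_mulVec_map_ofReal [Fintype ι] [Fintype κ] {K : Matrix ι κ ℝ}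
    (hK : Function.Injective K.mulVec) : Function.Injective (K.map Complex.ofReal).mulVec := by
  classical
  have hKK := (PosDef.conjTranspose_mul_self K hK).map_ofReal
  rw [map_ofReal_mul, map_ofReal_conjTranspose] at hKK
  refine Function.Injective.of_comp (f := (K.map Complex.ofReal)ᴴ.mulVec) ?_
  simpa only [Function.comp_def, mulVec_mulVec] using mulVec_injective_iff_isUnit.mpr hKK.isUnit

end OfReal

theorem injective_transpose_mulVec_of_rank_eq [Fintype ι] [Fintype κ] {R : Type*} [Field R]
    {B : Matrix κ ι R} (hB : B.rank = Fintype.card κ) : Function.Injective Bᵀ.mulVec := by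
  rw [mulVec_injective_iff, linearIndependent_iff_card_eq_finrank_span]
  unfold Set.finrank
  rw [← rank_eq_finrank_span_cols, rank_transpose, hB]

section SaddlePoint

def saddlePoint {R : Type*} [Star R] [Neg R] (A : Matrix ι ι R) (B : Matrix κ ι R)
    (C : Matrix κ κ R) : Matrix (ι ⊕ κ) (ι ⊕ κ) R :=
  fromBlocks A Bᴴ (-B) C

theorem saddlePoint_map_ofReal (A : Matrix ι ι ℝ) (B : Matrix κ ι ℝ) (C : Matrix κ κ ℝ) :
    (saddlePoint A B C).map Complex.ofReal
      = saddlePoint (A.map Complex.ofReal) (B.map Complex.ofReal) (C.map Complex.ofReal) := by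
  rw [saddlePoint, saddlePoint, fromBlocks_map, map_ofReal_conjTranspose,
    Matrix.map_neg _ (by simp)]

variable [Fintype ι] [Fintype κ]

theorem re_star_dotProduct_saddlePoint_mulVec (A : Matrix ι ι ℂ) (B : Matrix κ ι ℂ)
    (C : Matrix κ κ ℂ) (x : ι → ℂ) (y : κ → ℂ) :
    (star (Sum.elim x y) ⬝ᵥ (saddlePoint A B C *ᵥ Sum.elim x y)).re
      = (star x ⬝ᵥ (A *ᵥ x)).re + (star y ⬝ᵥ (C *ᵥ y)).re := by
  have hcross : star x ⬝ᵥ (Bᴴ *ᵥ y) = star (star y ⬝ᵥ (B *ᵥ x)) := by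
    rw [dotProduct_mulVec, vecMul_conjTranspose, star_star, star_dotProduct]
  simp only [saddlePoint, fromBlocks_mulVec, Sum.elim_comp_inl, Sum.elim_comp_inr,
    Function.star_sumElim, sumElim_dotProduct_sumElim, dotProduct_add, neg_mulVec, dotProduct_neg,
    hcross, Complex.add_re, Complex.neg_re, Complex.star_def, Complex.conj_re]
  ring

theorem re_pos_of_saddlePoint_mulVec_eq_smul {A : Matrix ι ι ℂ} {B : Matrix κ ι ℂ}
    {C : Matrix κ κ ℂ} {D₁ : Matrix ι ι ℂ} {D₂ : Matrix κ κ ℂ} (hA : A.PosDef)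
    (hC : C.PosSemidef) (hB : Function.Injective Bᴴ.mulVec) (hD : (fromBlocks D₁ 0 0 D₂).PosDef)
    {u : ι ⊕ κ → ℂ} (hu : u ≠ 0) {μ : ℂ}
    (h : saddlePoint A B C *ᵥ u = μ • (fromBlocks D₁ 0 0 D₂ *ᵥ u)) : 0 < μ.re := by
  obtain ⟨x, y, rfl⟩ : ∃ x y, u = Sum.elim x y := ⟨_, _, (Sum.elim_comp_inl_inr u).symm⟩
  have hDu := Complex.pos_iff.mp (hD.dotProduct_mulVec_pos hu)
  have hre := congrArg (fun v => (star (Sum.elim x y) ⬝ᵥ v).re) h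
  simp only [dotProduct_smul, smul_eq_mul] at hre
  rw [re_star_dotProduct_saddlePoint_mulVec, Complex.mul_re, ← hDu.2, mul_zero, sub_zero] at hre
  have hAx := Complex.nonneg_iff.mp (hA.posSemidef.dotProduct_mulVec_nonneg x)
  have hCy := Complex.nonneg_iff.mp (hC.dotProduct_mulVec_nonneg y)
  have hμ : 0 ≤ μ.re := nonneg_of_mul_nonneg_left (hre ▸ add_nonneg hAx.1 hCy.1) hDu.1
  refine hμ.lt_of_ne fun hμ0 => hu ?_
  have hx : x = 0 := by
    by_contra hx
    have hAx' := (Complex.pos_iff.mp (hA.dotProduct_mulVec_pos hx)).1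
    rw [← hμ0, zero_mul] at hre
    linarith
  subst hx
  simp only [saddlePoint, fromBlocks_mulVec, Sum.elim_comp_inl, Sum.elim_comp_inr, mulVec_zero,
    zero_mulVec, zero_add, add_zero] at h
  have hy : y = 0 := hB <| by
    rw [mulVec_zero]
    funext i
    simpa using congrFun h (Sum.inl i)
  rw [hy, Sum.elim_zero_zero]

theorem re_pos_of_saddlePoint_map_ofReal_mulVec_eq_smul {A : Matrix ι ι ℝ} {B : Matrix κ ι ℝ}
    {C : Matrix κ κ ℝ} {D₁ : Matrix ι ι ℝ} {D₂ : Matrix κ κ ℝ} (hA : A.PosDef)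
    (hC : C.PosSemidef) (hB : B.rank = Fintype.card κ) (hD : (fromBlocks D₁ 0 0 D₂).PosDef)
    {u : ι ⊕ κ → ℂ} (hu : u ≠ 0) {μ : ℂ}
    (h : (saddlePoint A B C).map Complex.ofReal *ᵥ u
      = μ • ((fromBlocks D₁ 0 0 D₂).map Complex.ofReal *ᵥ u)) : 0 < μ.re := by
  have hBc : Function.Injective (B.map Complex.ofReal)ᴴ.mulVec := by
    rw [← map_ofReal_conjTranspose, conjTranspose_eq_transpose_of_trivial]
    exact injective_mulVec_map_ofReal (injective_transpose_mulVec_of_rank_eq hB)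
  have hDc := hD.map_ofReal
  rw [fromBlocks_map, Matrix.map_zero _ rfl] at h hDc
  rw [saddlePoint_map_ofReal] at h
  exact re_pos_of_saddlePoint_mulVec_eq_smul hA.map_ofReal hC.map_ofReal hBc hDc hu h

end SaddlePoint

section Splitting

variable [Fintype ι] [DecidableEq ι] {M N : Matrix ι ι ℂ}

theorem isUnit_of_forall_sub_mulVec_eq_smul_add_mulVec
    (hP : ∀ u ≠ 0, ∀ μ : ℂ, (M - N) *ᵥ u = μ • ((M + N) *ᵥ u) → 0 < μ.re) : IsUnit M := by
  refine mulVec_injective_iff_isUnit.mp fun u v huv => ?_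
  by_contra hne
  have h0 : M *ᵥ (u - v) = 0 := by rw [mulVec_sub, huv, sub_self]
  have hneg := hP (u - v) (sub_ne_zero.mpr hne) (-1) <| by
    rw [sub_mulVec, add_mulVec, h0]
    simp
  norm_num at hneg

theorem norm_lt_one_of_nonsing_inv_mul_mulVec_eq_smul
    (hP : ∀ u ≠ 0, ∀ μ : ℂ, (M - N) *ᵥ u = μ • ((M + N) *ᵥ u) → 0 < μ.re)
    (hD : Function.Injective (M + N).mulVec) {u : ι → ℂ} (hu : u ≠ 0) {lam : ℂ}
    (h : (M⁻¹ * N) *ᵥ u = lam • u) : ‖lam‖ < 1 := by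
  have hM := (isUnit_iff_isUnit_det M).mp (isUnit_of_forall_sub_mulVec_eq_smul_add_mulVec hP)
  have hNu : N *ᵥ u = lam • (M *ᵥ u) := by
    rw [← mulVec_smul, ← h, mulVec_mulVec, ← mul_assoc, mul_nonsing_inv _ hM, one_mul]
  have hsub : (M - N) *ᵥ u = (1 - lam) • (M *ᵥ u) := by rw [sub_mulVec, hNu, sub_smul, one_smul]
  have hadd : (M + N) *ᵥ u = (1 + lam) • (M *ᵥ u) := by rw [add_mulVec, hNu, add_smul, one_smul]
  have hlam : 1 + lam ≠ 0 := fun hlam => hu <| hD <| by rw [hadd, hlam, zero_smul, mulVec_zero]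
  refine Complex.norm_lt_one_of_re_one_sub_div_one_add_pos (hP u hu _ ?_)
  rw [hsub, hadd, smul_smul, div_mul_cancel₀ _ hlam]

end Splitting

end Matrix

theorem spectral_radius_lt_one_general
    (n m : ℕ)
    (A : Matrix (Fin n) (Fin n) ℝ) (B : Matrix (Fin m) (Fin n) ℝ)
    (C : Matrix (Fin m) (Fin m) ℝ)
    (hA : A.PosDef) (hC : C.PosSemidef) (hB : B.rank = m)
    (α β : ℝ) (hα : 0 < α) (hβ : 0 < β)
    (M N : Matrix (Fin n ⊕ Fin m) (Fin n ⊕ Fin m) ℝ)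
    (hM : M = (1/2 : ℝ) • Matrix.fromBlocks
      (α • (1 : Matrix (Fin n) (Fin n) ℝ) + A) Bᵀ (-B)
      (β • (1 : Matrix (Fin m) (Fin m) ℝ) + C))
    (hN : N = (1/2 : ℝ) • Matrix.fromBlocks
      (α • (1 : Matrix (Fin n) (Fin n) ℝ) - A) (-Bᵀ) B
      (β • (1 : Matrix (Fin m) (Fin m) ℝ) - C)) :
    ∀ lam : ℂ, ∀ u : Fin n ⊕ Fin m → ℂ, u ≠ 0 →
      ((M⁻¹ * N).map Complex.ofReal) *ᵥ u = lam • u →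
      ‖lam‖ < 1 := by
  intro lam u hu hlam
  set D₁ : Matrix (Fin n) (Fin n) ℝ := α • 1
  set D₂ : Matrix (Fin m) (Fin m) ℝ := β • 1
  have hadd : M + N = fromBlocks D₁ 0 0 D₂ := by
    rw [hM, hN, ← smul_add, fromBlocks_add, fromBlocks_smul]
    congr 1 <;> module
  have hsub : M - N = saddlePoint A B C := by
    rw [hM, hN, saddlePoint, conjTranspose_eq_transpose_of_trivial, ← smul_sub, sub_eq_add_neg,
      fromBlocks_neg, fromBlocks_add, fromBlocks_smul]
    congr 1 <;> module
  have hD : (fromBlocks D₁ 0 0 D₂).PosDef := by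
    simp only [D₁, D₂, smul_one_eq_diagonal, fromBlocks_diagonal, posDef_diagonal_iff]
    rintro (i | i) <;> assumption
  rw [map_ofReal_mul, map_ofReal_nonsing_inv] at hlam
  refine norm_lt_one_of_nonsing_inv_mul_mulVec_eq_smul (fun v hv μ h => ?_) ?_ hu hlam
  · rw [← Matrix.map_sub _ (by simp), ← Matrix.map_add _ (by simp), hsub, hadd] at h
    exact re_pos_of_saddlePoint_map_ofReal_mulVec_eq_smul hA hC (by simpa using hB) hD hv h
  · rw [← Matrix.map_add _ (by simp), hadd]
    exact mulVec_injective_iff_isUnit.mpr hD.map_ofReal.isUnit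

theorem spectral_radius_lt_one
    (n m : ℕ) (hn : 0 < n) (hm : 0 < m) (hmn : m ≤ n)
    (A : Matrix (Fin n) (Fin n) ℝ) (B : Matrix (Fin m) (Fin n) ℝ)
    (C : Matrix (Fin m) (Fin m) ℝ)
    (hA : A.PosDef) (hC : C.PosSemidef) (hB : B.rank = m)
    (α β : ℝ) (hα : 0 < α) (hβ : 0 < β)
    (M N : Matrix (Fin n ⊕ Fin m) (Fin n ⊕ Fin m) ℝ)
    (hM : M = (1/2 : ℝ) • Matrix.fromBlocks
      (α • (1 : Matrix (Fin n) (Fin n) ℝ) + A) Bᵀ (-B)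
      (β • (1 : Matrix (Fin m) (Fin m) ℝ) + C))
    (hN : N = (1/2 : ℝ) • Matrix.fromBlocks
      (α • (1 : Matrix (Fin n) (Fin n) ℝ) - A) (-Bᵀ) B
      (β • (1 : Matrix (Fin m) (Fin m) ℝ) - C)) :
    ∀ lam : ℂ, ∀ u : Fin n ⊕ Fin m → ℂ, u ≠ 0 →
      ((M⁻¹ * N).map Complex.ofReal) *ᵥ u = lam • u →
      ‖lam‖ < 1 :=
  spectral_radius_lt_one_general n m A B C hA hC hB α β hα hβ M N hM hN
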